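/- The quotient space K = (βℤⁿ × Iⁿ)/h is a compact Hausdorff space, and the quotient map q : βℤⁿ × Iⁿ → K is a closed map. -/
import Mathlib


open Set

noncomputable section

/-- `A₀(i)`: the set of coordinates where `i` equals `1`. -/
def Aset (n : ℕ) (i : Fin n → unitInterval) : Set (Fin n) := {k | (i k : ℝ) = 1}

/-- `B₀(i)`: the set of coordinates where `i` equals `0`. -/
def Bset (n : ℕ) (i : Fin n → unitInterval) : Set (Fin n) := {k | (i k : ℝ) = 0}

open Classical in
/-- `ψ_A(i)`: replace `i k` by `1 - i k` for every `k ∈ A`. -/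
def psiFlip (n : ℕ) (A : Set (Fin n)) (i : Fin n → unitInterval) : Fin n → unitInterval :=
  fun k => if k ∈ A then unitInterval.symm (i k) else i k

open Classical in
/-- `1_S`: the indicator vector of `S` in `ℤⁿ`. -/
def indVec (n : ℕ) (S : Set (Fin n)) : Fin n → ℤ := fun k => if k ∈ S then 1 else 0
/-- `h_N`: the Stone–Čech extension of translation by `N` on `ℤⁿ`. -/
def hshift (n : ℕ) (N : Fin n → ℤ) : StoneCech (Fin n → ℤ) → StoneCech (Fin n → ℤ) :=
  stoneCechExtend (g := fun z : Fin n → ℤ => stoneCechUnit (z + N))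
    (continuous_stoneCechUnit.comp continuous_of_discreteTopology)

/-- The relation `h` on `βℤⁿ × Iⁿ`. -/
def hrel (n : ℕ) (x y : StoneCech (Fin n → ℤ) × (Fin n → unitInterval)) : Prop :=
  ∃ A B : Set (Fin n), A ⊆ Aset n x.2 ∧ B ⊆ Bset n x.2 ∧
    y.1 = hshift n (indVec n A - indVec n B) x.1 ∧ y.2 = psiFlip n (A ∪ B) x.2

/-- `K = (βℤⁿ × Iⁿ)/h`, with the quotient topology. -/
abbrev Kspace (n : ℕ) := Quot (hrel n)

/-- The quotient map `q : βℤⁿ × Iⁿ → K`. -/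
abbrev qmap (n : ℕ) : StoneCech (Fin n → ℤ) × (Fin n → unitInterval) → Kspace n :=
  Quot.mk (hrel n)

-- auxiliary lemmas
lemma continuous_hshift (n : ℕ) (N : Fin n → ℤ) : Continuous (hshift n N) :=
  continuous_stoneCechExtend _

lemma hshift_unit (n : ℕ) (N : Fin n → ℤ) (z : Fin n → ℤ) :
    hshift n N (stoneCechUnit z) = stoneCechUnit (z + N) :=
  congrFun (stoneCechExtend_extends _) z

lemma hshift_hshift (n : ℕ) (M N : Fin n → ℤ) (p : StoneCech (Fin n → ℤ)) :
    hshift n M (hshift n N p) = hshift n (N + M) p := by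
  have h : (hshift n M ∘ hshift n N) = hshift n (N + M) := by
    apply Continuous.ext_on denseRange_stoneCechUnit
      ((continuous_hshift n M).comp (continuous_hshift n N)) (continuous_hshift n (N + M))
    rintro x ⟨z, rfl⟩
    simp [Function.comp, hshift_unit, add_assoc]
  exact congrFun h p

lemma hshift_zero (n : ℕ) (p : StoneCech (Fin n → ℤ)) : hshift n 0 p = p := by
  have h : hshift n (0 : Fin n → ℤ) = id := by
    apply Continuous.ext_on denseRange_stoneCechUnit (continuous_hshift n 0) continuous_id
    rintro x ⟨z, rfl⟩
    simp [hshift_unit]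
  exact congrFun h p

lemma indVec_empty (n : ℕ) : indVec n (∅ : Set (Fin n)) = 0 := by
  funext k; simp [indVec]

lemma hrel_refl (n : ℕ) (x : StoneCech (Fin n → ℤ) × (Fin n → unitInterval)) : hrel n x x := by
  refine ⟨∅, ∅, empty_subset _, empty_subset _, ?_, ?_⟩
  · rw [indVec_empty, sub_zero, hshift_zero]
  · funext k; simp [psiFlip]

lemma hrel_symm (n : ℕ) {x y : StoneCech (Fin n → ℤ) × (Fin n → unitInterval)}
    (h : hrel n x y) : hrel n y x := by
  obtain ⟨A, B, hA, hB, h1, h2⟩ := h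
  refine ⟨B, A, ?_, ?_, ?_, ?_⟩
  · intro k hk
    have hx0 : (x.2 k : ℝ) = 0 := hB hk
    have : k ∈ A ∪ B := Or.inr hk
    simp only [Aset, mem_setOf_eq, h2, psiFlip, if_pos this, unitInterval.coe_symm_eq, hx0]
    ring
  · intro k hk
    have hx1 : (x.2 k : ℝ) = 1 := hA hk
    have : k ∈ A ∪ B := Or.inl hk
    simp only [Bset, mem_setOf_eq, h2, psiFlip, if_pos this, unitInterval.coe_symm_eq, hx1]
    ring
  · rw [h1, hshift_hshift]
    have : indVec n A - indVec n B + (indVec n B - indVec n A) = 0 := by ring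
    rw [this, hshift_zero]
  · rw [h2]
    funext k
    by_cases hk : k ∈ A ∪ B
    · have hk' : k ∈ B ∪ A := union_comm A B ▸ hk
      simp [psiFlip, hk, hk', unitInterval.symm_symm]
    · have hk' : k ∉ B ∪ A := fun h => hk (union_comm B A ▸ h)
      simp [psiFlip, hk, hk']

lemma hrel_trans (n : ℕ) {x y z : StoneCech (Fin n → ℤ) × (Fin n → unitInterval)}
    (hxy : hrel n x y) (hyz : hrel n y z) : hrel n x z := by
  obtain ⟨A, B, hA, hB, h1, h2⟩ := hxy
  obtain ⟨A', B', hA', hB', h1', h2'⟩ := hyz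
  have xA : ∀ k ∈ A, (x.2 k : ℝ) = 1 := fun k hk => hA hk
  have xB : ∀ k ∈ B, (x.2 k : ℝ) = 0 := fun k hk => hB hk
  have yA' : ∀ k ∈ A', (y.2 k : ℝ) = 1 := fun k hk => hA' hk
  have yB' : ∀ k ∈ B', (y.2 k : ℝ) = 0 := fun k hk => hB' hk
  have yval1 : ∀ k, k ∈ A ∪ B → (y.2 k : ℝ) = 1 - (x.2 k : ℝ) := by
    intro k hk; rw [h2]; simp [psiFlip, hk, unitInterval.coe_symm_eq]
  have yval2 : ∀ k, k ∉ A ∪ B → y.2 k = x.2 k := by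
    intro k hk; rw [h2]; simp [psiFlip, hk]
  have dAB : ∀ k, k ∈ A → k ∈ B → False := fun k h1 h2 => by
    have := xA k h1; have := xB k h2; linarith
  have dA'B' : ∀ k, k ∈ A' → k ∈ B' → False := fun k h1 h2 => by
    have := yA' k h1; have := yB' k h2; linarith
  have dAA' : ∀ k, k ∈ A → k ∈ A' → False := fun k h1 h2 => by
    have hx := xA k h1; have hy := yA' k h2
    rw [yval1 k (Or.inl h1)] at hy; linarith
  have dBB' : ∀ k, k ∈ B → k ∈ B' → False := fun k h1 h2 => by
    have hx := xB k h1; have hy := yB' k h2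
    rw [yval1 k (Or.inr h1)] at hy; linarith
  have A'x : ∀ k, k ∈ A' → k ∉ B → (x.2 k : ℝ) = 1 := by
    intro k hk hkB
    have hy := yA' k hk
    have hkA : k ∉ A := fun h => dAA' k h hk
    rw [yval2 k (fun h => h.elim hkA hkB)] at hy
    exact hy
  have B'x : ∀ k, k ∈ B' → k ∉ A → (x.2 k : ℝ) = 0 := by
    intro k hk hkA
    have hy := yB' k hk
    have hkB : k ∉ B := fun h => dBB' k h hk
    rw [yval2 k (fun h => h.elim hkA hkB)] at hy
    exact hy
  refine ⟨(A \ B') ∪ (A' \ B), (B \ A') ∪ (B' \ A), ?_, ?_, ?_, ?_⟩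
  · rintro k (⟨hk, -⟩ | ⟨hk, hk2⟩)
    · exact hA hk
    · exact A'x k hk hk2
  · rintro k (⟨hk, -⟩ | ⟨hk, hk2⟩)
    · exact hB hk
    · exact B'x k hk hk2
  · rw [h1', h1, hshift_hshift]
    congr 1
    funext k
    have d1 : ¬(k ∈ A ∧ k ∈ B) := fun ⟨u, v⟩ => dAB k u v
    have d2 : ¬(k ∈ A' ∧ k ∈ B') := fun ⟨u, v⟩ => dA'B' k u v
    have d3 : ¬(k ∈ A ∧ k ∈ A') := fun ⟨u, v⟩ => dAA' k u v
    have d4 : ¬(k ∈ B ∧ k ∈ B') := fun ⟨u, v⟩ => dBB' k u v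
    clear h1 h2 h1' h2' hA hB hA' hB' xA xB yA' yB' yval1 yval2 dAB dA'B' dAA' dBB' A'x B'x
    clear x y z
    by_cases ha : k ∈ A <;> by_cases hb : k ∈ B <;> by_cases ha' : k ∈ A' <;>
      by_cases hb' : k ∈ B' <;>
      simp_all [indVec, Set.mem_union, Set.mem_diff]
  · rw [h2', h2]
    funext k
    have d1 : ¬(k ∈ A ∧ k ∈ B) := fun ⟨u, v⟩ => dAB k u v
    have d2 : ¬(k ∈ A' ∧ k ∈ B') := fun ⟨u, v⟩ => dA'B' k u v
    have d3 : ¬(k ∈ A ∧ k ∈ A') := fun ⟨u, v⟩ => dAA' k u v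
    have d4 : ¬(k ∈ B ∧ k ∈ B') := fun ⟨u, v⟩ => dBB' k u v
    clear h1 h2 h1' h2' hA hB hA' hB' xA xB yA' yB' yval1 yval2 dAB dA'B' dAA' dBB' A'x B'x
    by_cases ha : k ∈ A <;> by_cases hb : k ∈ B <;> by_cases ha' : k ∈ A' <;>
      by_cases hb' : k ∈ B' <;>
      simp_all [psiFlip, Set.mem_union, Set.mem_diff, unitInterval.symm_symm]

lemma continuous_psiFlip (n : ℕ) (A : Set (Fin n)) : Continuous (psiFlip n A) := by
  apply continuous_pi
  intro k
  by_cases hk : k ∈ A <;> simp only [psiFlip, hk, if_true, if_false]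
  · exact unitInterval.continuous_symm.comp (continuous_apply k)
  · exact continuous_apply k

lemma hrel_isClosed (n : ℕ) :
    IsClosed {p : (StoneCech (Fin n → ℤ) × (Fin n → unitInterval)) ×
      (StoneCech (Fin n → ℤ) × (Fin n → unitInterval)) | hrel n p.1 p.2} := by
  have : {p : (StoneCech (Fin n → ℤ) × (Fin n → unitInterval)) ×
      (StoneCech (Fin n → ℤ) × (Fin n → unitInterval)) | hrel n p.1 p.2} =
      ⋃ (A : Set (Fin n)), ⋃ (B : Set (Fin n)),
        ((⋂ k ∈ A, {p : (StoneCech (Fin n → ℤ) × (Fin n → unitInterval)) ×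
            (StoneCech (Fin n → ℤ) × (Fin n → unitInterval)) | (p.1.2 k : ℝ) = 1}) ∩
         (⋂ k ∈ B, {p | (p.1.2 k : ℝ) = 0}) ∩
         {p | p.2.1 = hshift n (indVec n A - indVec n B) p.1.1} ∩
         {p | p.2.2 = psiFlip n (A ∪ B) p.1.2}) := by
    ext p
    simp only [mem_setOf_eq, mem_iUnion, mem_inter_iff, mem_iInter, hrel]
    constructor
    · rintro ⟨A, B, hA, hB, h1, h2⟩
      exact ⟨A, B, ⟨⟨fun k hk => hA hk, fun k hk => hB hk⟩, h1⟩, h2⟩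
    · rintro ⟨A, B, ⟨⟨hA, hB⟩, h1⟩, h2⟩
      exact ⟨A, B, fun k hk => hA k hk, fun k hk => hB k hk, h1, h2⟩
  rw [this]
  apply isClosed_iUnion_of_finite
  intro A
  apply isClosed_iUnion_of_finite
  intro B
  have c1 : Continuous fun p : (StoneCech (Fin n → ℤ) × (Fin n → unitInterval)) ×
      (StoneCech (Fin n → ℤ) × (Fin n → unitInterval)) => p.1.2 :=
    continuous_snd.comp continuous_fst
  refine IsClosed.inter (IsClosed.inter (IsClosed.inter ?_ ?_) ?_) ?_
  · exact isClosed_biInter fun k _ => isClosed_eq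
      (continuous_subtype_val.comp ((continuous_apply k).comp c1)) continuous_const
  · exact isClosed_biInter fun k _ => isClosed_eq
      (continuous_subtype_val.comp ((continuous_apply k).comp c1)) continuous_const
  · exact isClosed_eq (continuous_fst.comp continuous_snd)
      ((continuous_hshift n _).comp (continuous_fst.comp continuous_fst))
  · exact isClosed_eq (continuous_snd.comp continuous_snd)
      ((continuous_psiFlip n _).comp c1)


theorem statement3 (n : ℕ) (hn : 1 ≤ n) :
    CompactSpace (Kspace n) ∧ T2Space (Kspace n) ∧ IsClosedMap (qmap n) := by
  have equiv : Equivalence (hrel n) :=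
    ⟨hrel_refl n, fun h => hrel_symm n h, fun h h' => hrel_trans n h h'⟩
  have key : ∀ a b, qmap n a = qmap n b ↔ hrel n a b := fun a b => by
    rw [Quot.eq]; exact equiv.eqvGen_iff
  have hclosedmap : IsClosedMap (qmap n) := by
    intro C hC
    have hsat : qmap n ⁻¹' (qmap n '' C) =
        Prod.fst '' ({p | hrel n p.1 p.2} ∩ (univ ×ˢ C)) := by
      ext u
      simp only [mem_preimage, mem_image, mem_inter_iff, mem_prod, mem_univ, true_and,
        mem_setOf_eq]
      constructor
      · rintro ⟨c, hc, hq⟩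
        exact ⟨(u, c), ⟨(key u c).mp hq.symm, hc⟩, rfl⟩
      · rintro ⟨⟨u', c⟩, ⟨hr, hc⟩, rfl⟩
        exact ⟨c, hc, ((key _ c).mpr hr).symm⟩
    have hcl : IsClosed (qmap n ⁻¹' (qmap n '' C)) := by
      rw [hsat]
      exact isClosedMap_fst_of_compactSpace _ ((hrel_isClosed n).inter (isClosed_univ.prod hC))
    exact (isQuotientMap_quot_mk.isClosed_preimage).mp hcl
  have hT2 : T2Space (Kspace n) := by
    constructor
    intro a b hab
    obtain ⟨x, rfl⟩ := Quot.exists_rep a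
    obtain ⟨y, rfl⟩ := Quot.exists_rep b
    have hCx : IsClosed {u | hrel n u x} :=
      (hrel_isClosed n).preimage (continuous_id.prodMk continuous_const)
    have hCy : IsClosed {u | hrel n u y} :=
      (hrel_isClosed n).preimage (continuous_id.prodMk continuous_const)
    have hdisj : Disjoint {u | hrel n u x} {u | hrel n u y} := by
      rw [Set.disjoint_left]
      intro u hux huy
      exact hab ((key x y).mpr (equiv.trans (equiv.symm hux) huy))
    obtain ⟨U, V, hU, hV, hxU, hyV, hUV⟩ := NormalSpace.normal _ _ hCx hCy hdisj
    refine ⟨(qmap n '' Uᶜ)ᶜ, (qmap n '' Vᶜ)ᶜ,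
      isOpen_compl_iff.mpr (hclosedmap _ hU.isClosed_compl),
      isOpen_compl_iff.mpr (hclosedmap _ hV.isClosed_compl), ?_, ?_, ?_⟩
    · rintro ⟨u, hu, hq⟩
      exact hu (hxU ((key u x).mp hq))
    · rintro ⟨u, hu, hq⟩
      exact hu (hyV ((key u y).mp hq))
    · rw [Set.disjoint_left]
      rintro z hz1 hz2
      obtain ⟨w, rfl⟩ := Quot.exists_rep z
      have hw1 : w ∈ U := by by_contra h; exact hz1 ⟨w, h, rfl⟩
      have hw2 : w ∈ V := by by_contra h; exact hz2 ⟨w, h, rfl⟩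
      exact Set.disjoint_left.mp hUV hw1 hw2
  exact ⟨inferInstance, hT2, hclosedmap⟩
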